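/- Let f : ℝ → ℝ be convex with bounded right derivative f'_+, and let μ be the measure on ℝ defined by μ[a, b) = f'_−(b) − f'_−(a) (the second derivative measure), assumed supported in a compact interval I. Then there exist constants α and β such that f(x) = (1/2)∫_I |x − a| μ(da) + αx + β for all x ∈ ℝ. -/

import Mathlib

/-!
Write `L = leftDeriv f` and let `c` lie to the left of the support of `μ`. The hypothesis on `μ`
says `L t = L c + μ (-∞, t)`, so the fundamental theorem of calculus (for the right derivative,
which agrees with `L` off a countable set) gives `f x = f c + L c (x - c) + ∫_c^x μ (-∞, t) dt`,
and by Fubini the last integral is `∫ (x - a)⁺ dμ(a) = (∫ |x - a| dμ(a) + x μ ℝ - ∫ a dμ(a)) / 2`.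

If `μ` is infinite, `toReal` turns every interval into a null one as far as the hypothesis sees:
then `L` is constant, `f` is affine, and `∫ |x - a| dμ(a) = 0`, because `|x - ·|` can only be
integrable when `μ` is concentrated at `x`.
-/

open MeasureTheory

/-- Left derivative. -/
noncomputable def leftDeriv (f : ℝ → ℝ) (x : ℝ) : ℝ := derivWithin f (Set.Iio x) x

/-- Right derivative. -/
noncomputable def rightDeriv (f : ℝ → ℝ) (x : ℝ) : ℝ := derivWithin f (Set.Ioi x) x

open Set Filter Topology

namespace ConvexOn

variable {f : ℝ → ℝ}

lemma monotone_leftDeriv (hf : ConvexOn ℝ univ f) : Monotone (leftDeriv f) :=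
  fun x y hxy ↦ hf.monotoneOn_leftDeriv (by simp) (by simp) hxy

lemma monotone_rightDeriv (hf : ConvexOn ℝ univ f) : Monotone (rightDeriv f) :=
  fun x y hxy ↦ hf.monotoneOn_rightDeriv (by simp) (by simp) hxy

lemma rightDeriv_le_leftDeriv_of_lt (hf : ConvexOn ℝ univ f) {x y : ℝ} (hxy : x < y) :
    rightDeriv f x ≤ leftDeriv f y :=
  (hf.rightDeriv_le_slope_of_mem_interior (by simp) trivial hxy).trans
    (hf.slope_le_leftDeriv_of_mem_interior trivial (by simp) hxy)

/-- At a continuity point `x` of `leftDeriv f`, `rightDeriv f x ≤ leftDeriv f y → leftDeriv f x`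
as `y → x⁺`, and a monotone function has only countably many discontinuities. -/
lemma leftDeriv_ae_eq_rightDeriv (hf : ConvexOn ℝ univ f) :
    leftDeriv f =ᵐ[volume] rightDeriv f := by
  have hcont : ∀ᵐ x, ContinuousAt (leftDeriv f) x :=
    hf.monotone_leftDeriv.countable_not_continuousAt.measure_zero volume
  filter_upwards [hcont] with x hx
  refine le_antisymm (hf.leftDeriv_le_rightDeriv_of_mem_interior (by simp)) ?_
  refine ge_of_tendsto (hx.tendsto.mono_left (nhdsWithin_le_nhds (s := Ioi x))) ?_
  filter_upwards [self_mem_nhdsWithin] with y (hy : x < y)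
  exact hf.rightDeriv_le_leftDeriv_of_lt hy

lemma integral_leftDeriv (hf : ConvexOn ℝ univ f) (a b : ℝ) :
    ∫ t in a..b, leftDeriv f t = f b - f a := by
  rw [intervalIntegral.integral_congr_ae (hf.leftDeriv_ae_eq_rightDeriv.mono fun _ h _ ↦ h)]
  exact intervalIntegral.integral_eq_sub_of_hasDeriv_right
    ((hf.continuousOn isOpen_univ).mono (subset_univ _))
    (fun x _ ↦ hf.hasDerivWithinAt_rightDeriv_of_mem_interior (by simp))
    hf.monotone_rightDeriv.intervalIntegrable

lemma apply_eq_of_leftDeriv_eq_add (hf : ConvexOn ℝ univ f) {G : ℝ → ℝ} {c : ℝ}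
    (hG : ∀ t, leftDeriv f t = leftDeriv f c + G t) (x : ℝ) :
    f x = f c + leftDeriv f c * (x - c) + ∫ t in c..x, G t := by
  have hG' : ∫ t in c..x, G t = ∫ t in c..x, (leftDeriv f t - leftDeriv f c) :=
    intervalIntegral.integral_congr fun t _ ↦ by linarith [hG t]
  rw [hG', intervalIntegral.integral_sub hf.monotone_leftDeriv.intervalIntegrable
    intervalIntegrable_const, hf.integral_leftDeriv, intervalIntegral.integral_const, smul_eq_mul]
  ring

end ConvexOn

section Measure

variable {μ : Measure ℝ}

lemma measure_Iio_eq_zero_of_compl_Icc {c d : ℝ} (hsupp : μ (Icc c d)ᶜ = 0) : μ (Iio c) = 0 :=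
  measure_mono_null (fun a (ha : a < c) (h : a ∈ Icc c d) ↦ not_le.2 ha h.1) hsupp

lemma eq_add_measureReal_Iio {g : ℝ → ℝ}
    (hμ : ∀ a b, a ≤ b → μ.real (Ico a b) = g b - g a) {c : ℝ} (hc : μ (Iio c) = 0)
    (t : ℝ) : g t = g c + μ.real (Iio t) := by
  rcases le_total c t with hct | htc
  · have hIio : μ (Iio t) = μ (Ico c t) := by
      rw [← Iio_union_Ico_eq_Iio hct]
      exact measure_congr (union_ae_eq_right_of_ae_eq_empty (ae_eq_empty.2 hc))
    rw [Measure.real, hIio, ← Measure.real, hμ c t hct]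
    ring
  · have hIio : μ (Iio t) = 0 := measure_mono_null (Iio_subset_Iio htc) hc
    have hIco : μ (Ico t c) = 0 := measure_mono_null Ico_subset_Iio_self hc
    have hgtc := hμ t c htc
    simp only [Measure.real, hIio, hIco, ENNReal.toReal_zero] at hgtc ⊢
    linarith

lemma eq_of_not_isFiniteMeasure {g : ℝ → ℝ} (hg : Monotone g)
    (hμ : ∀ a b, a ≤ b → μ.real (Ico a b) = g b - g a) {c d : ℝ} (hsupp : μ (Icc c d)ᶜ = 0)
    (hfin : ¬IsFiniteMeasure μ) (t : ℝ) : g t = g c := by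
  have hg_eq := eq_add_measureReal_Iio hμ (measure_Iio_eq_zero_of_compl_Icc hsupp)
  set s := max t (d + 1)
  have htop : μ (Iio s) = ⊤ := by
    refine top_unique ((not_isFiniteMeasure_iff.1 hfin).symm.le.trans
      ((measure_univ_le_add_compl (Icc c d)).trans ?_))
    rw [hsupp, add_zero]
    exact measure_mono fun a ha ↦ by simp only [mem_Iio]; linarith [ha.2, le_max_right t (d + 1)]
  have hmono : μ.real (Iio t) ≤ μ.real (Iio s) := by
    linarith [hg_eq t, hg_eq s, hg (le_max_left t (d + 1))]
  have hzero : μ.real (Iio t) = 0 :=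
    le_antisymm (hmono.trans (by simp [Measure.real, htop])) measureReal_nonneg
  rw [hg_eq t, hzero, add_zero]

lemma integral_max_sub_zero [IsFiniteMeasure μ] (hint : Integrable (fun a ↦ a) μ) (x : ℝ) :
    ∫ a, max (x - a) 0 ∂μ = (∫ a, |x - a| ∂μ + x * μ.real univ - ∫ a, a ∂μ) / 2 := by
  have hsub : Integrable (fun a ↦ x - a) μ := (integrable_const x).sub hint
  have hmax : ∀ a, max (x - a) 0 = (|x - a| + (x - a)) / 2 := fun a ↦ by
    rcases le_total (x - a) 0 with h | h
    · rw [max_eq_right h, abs_of_nonpos h]; ring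
    · rw [max_eq_left h, abs_of_nonneg h]; ring
  simp_rw [hmax, integral_div, integral_add hsub.abs hsub, integral_sub (integrable_const x) hint,
    integral_const, smul_eq_mul]
  ring

lemma integral_abs_sub_eq_zero {c d : ℝ} (hsupp : μ (Icc c d)ᶜ = 0)
    (h0 : ∀ a b, a ≤ b → μ.real (Ico a b) = 0) (x : ℝ) : ∫ a, |x - a| ∂μ = 0 := by
  by_cases hint : Integrable (fun a ↦ |x - a|) μ
  swap; · exact integral_undef hint
  have hIco : ∀ {δ a b : ℝ}, 0 < δ → (∀ y ∈ Ico a b, δ ≤ |x - y|) → μ (Ico a b) = 0 := by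
    intro δ a b hδ hab
    have hfin : μ (Ico a b) ≠ ⊤ := ne_top_of_le_ne_top (hint.measure_norm_ge_lt_top hδ).ne
      (measure_mono fun y hy ↦ by simpa using hab y hy)
    rcases le_or_gt a b with hab' | hab'
    · exact (measureReal_eq_zero_iff hfin).1 (h0 a b hab')
    · simp [Ico_eq_empty_of_le hab'.le]
  have hnear : ∀ δ > 0, ∀ᵐ a ∂μ, |x - a| ≤ δ := by
    intro δ hδ
    have hleft : μ (Ico c (x - δ)) = 0 :=
      hIco hδ fun y hy ↦ le_abs.2 (Or.inl (by linarith [hy.2]))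
    have hright : μ (Ico (x + δ) (d + 1)) = 0 :=
      hIco hδ fun y hy ↦ le_abs.2 (Or.inr (by linarith [hy.1]))
    refine ae_iff.2 (measure_mono_null (fun a ha ↦ ?_)
      (measure_union_null (measure_union_null hsupp hleft) hright))
    simp only [mem_ofPred_eq, not_le, lt_abs] at ha
    by_cases hac : a ∈ Icc c d
    · rcases ha with ha | ha
      · exact Or.inl (Or.inr ⟨hac.1, by linarith⟩)
      · exact Or.inr ⟨by linarith, by linarith [hac.2]⟩
    · exact Or.inl (Or.inl hac)
  have hx : ∀ᵐ a ∂μ, a = x := by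
    filter_upwards [ae_all_iff.2 fun n : ℕ ↦ hnear (1 / (n + 1)) Nat.one_div_pos_of_nat] with a ha
    refine (eq_of_forall_dist_le fun ε hε ↦ ?_)
    obtain ⟨n, hn⟩ := exists_nat_one_div_lt hε
    rw [Real.dist_eq, abs_sub_comm]
    exact (ha n).trans hn.le
  rw [integral_eq_zero_of_ae]
  filter_upwards [hx] with a rfl
  simp

lemma intervalIntegral_measureReal_Iio [IsFiniteMeasure μ] {c : ℝ} (hc : μ (Iio c) = 0)
    (x : ℝ) : ∫ t in c..x, μ.real (Iio t) = ∫ a, max (x - a) 0 ∂μ := by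
  have hge : ∀ᵐ a ∂μ, c ≤ a := by
    simpa using measure_eq_zero_iff_ae_notMem.1 hc
  rcases le_total c x with hcx | hxc
  · let S : Set (ℝ × ℝ) := {p | p.2 < p.1}
    have hS : MeasurableSet S := measurableSet_lt measurable_snd measurable_fst
    calc ∫ t in c..x, μ.real (Iio t)
        = ∫ t in Ioc c x, ∫ a, S.indicator (fun _ ↦ (1 : ℝ)) (t, a) ∂μ := by
          rw [intervalIntegral.integral_of_le hcx]
          refine setIntegral_congr_fun measurableSet_Ioc fun t _ ↦ ?_
          rw [← integral_indicator_one measurableSet_Iio]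
          rfl
      _ = ∫ a, (∫ t in Ioc c x, S.indicator (fun _ ↦ (1 : ℝ)) (t, a)) ∂μ :=
          integral_integral_swap ((integrable_const (1 : ℝ)).indicator hS)
      _ = ∫ a, max (x - a) 0 ∂μ := by
          refine integral_congr_ae ?_
          filter_upwards [hge] with a ha
          have hset : Ioi a ∩ Ioc c x = Ioc a x := by
            rw [inter_comm, Ioc_inter_Ioi, sup_eq_right.2 ha]
          rw [← Real.volume_real_Ioc, ← hset, ← measureReal_restrict_apply measurableSet_Ioi,
            ← integral_indicator_one measurableSet_Ioi]
          rfl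
  · have hI : ∀ t ∈ uIcc c x, μ.real (Iio t) = 0 := fun t ht ↦ by
      rw [uIcc_of_ge hxc] at ht
      rw [measureReal_eq_zero_iff]
      exact measure_mono_null (Iio_subset_Iio ht.2) hc
    rw [intervalIntegral.integral_congr hI, intervalIntegral.integral_zero, integral_eq_zero_of_ae]
    filter_upwards [hge] with a ha
    simp [hxc.trans ha]

end Measure

theorem convex_representation_general
    (f : ℝ → ℝ) (hf : ConvexOn ℝ Set.univ f)
    (μ : Measure ℝ)
    (hμ : ∀ a b : ℝ, a ≤ b → (μ (Set.Ico a b)).toReal = leftDeriv f b - leftDeriv f a)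
    (I : Set ℝ) (hI : IsCompact I)
    (hsupp : μ Iᶜ = 0) :
    ∃ α β : ℝ, ∀ x : ℝ, f x = (1 / 2) * ∫ a in I, |x - a| ∂μ + α * x + β := by
  set L := leftDeriv f
  set c := sInf I
  have hsupp' : μ (Icc c (sSup I))ᶜ = 0 :=
    measure_mono_null (compl_subset_compl.2 hI.isBounded.subset_Icc_sInf_sSup) hsupp
  have hc := measure_Iio_eq_zero_of_compl_Icc hsupp'
  have hrestrict : μ.restrict I = μ := Measure.restrict_eq_self_of_ae_mem (mem_ae_iff.2 hsupp)
  rw [hrestrict]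
  by_cases hfin : IsFiniteMeasure μ
  · have hint : Integrable (fun a ↦ a) μ := by
      rw [← hrestrict]
      exact continuous_id.continuousOn.integrableOn_compact hI
    refine ⟨L c + μ.real univ / 2, f c - L c * c - (∫ a, a ∂μ) / 2, fun x ↦ ?_⟩
    rw [hf.apply_eq_of_leftDeriv_eq_add (eq_add_measureReal_Iio hμ hc) x,
      intervalIntegral_measureReal_Iio hc, integral_max_sub_zero hint]
    ring
  · have hL : ∀ t, L t = L c := eq_of_not_isFiniteMeasure hf.monotone_leftDeriv hμ hsupp' hfin
    have h0 : ∀ a b, a ≤ b → μ.real (Ico a b) = 0 := fun a b hab ↦ by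
      rw [Measure.real, hμ a b hab, hL a, hL b, sub_self]
    have hL0 : ∀ t, L t = L c + (0 : ℝ → ℝ) t := fun t ↦ (hL t).trans (add_zero _).symm
    refine ⟨L c, f c - L c * c, fun x ↦ ?_⟩
    rw [hf.apply_eq_of_leftDeriv_eq_add hL0 x, integral_abs_sub_eq_zero hsupp' h0 x]
    simp only [Pi.zero_apply, intervalIntegral.integral_zero]
    ring

/-- a convex function with bounded right derivative and second-derivative
measure μ supported in a compact interval I can be represented as
f(x) = (1/2)∫_I |x−a| μ(da) + αx + β. -/
theorem convex_representation
    (f : ℝ → ℝ) (hf : ConvexOn ℝ Set.univ f)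
    (hbdd : ∃ M : ℝ, ∀ x, |rightDeriv f x| ≤ M)
    (μ : Measure ℝ)
    (hμ : ∀ a b : ℝ, a ≤ b → (μ (Set.Ico a b)).toReal = leftDeriv f b - leftDeriv f a)
    (I : Set ℝ) (hI : IsCompact I) (hIinterval : ∃ c d : ℝ, I = Set.Icc c d)
    (hsupp : μ Iᶜ = 0) :
    ∃ α β : ℝ, ∀ x : ℝ, f x = (1 / 2) * ∫ a in I, |x - a| ∂μ + α * x + β :=
  convex_representation_general f hf μ hμ I hI hsupp
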